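/- Let A be an associative unital ℂ-algebra, let q ∈ ℂ be a primitive 24th root of unity, and let e ∈ A satisfy e·e = (−q² − q⁻²)·e. Set σ = q·1 + q⁻¹·e and σ̄ = q⁻¹·1 + q·e. Then σ³ = q³·1 and σ̄³ = q⁻³·1; consequently σ³·σ̄³ = 1. -/

import Mathlib

/-! At a primitive 24th root of unity `q` we have `q ^ 12 = -1` but `q ^ 4 ≠ -1`, so `q` is a
root of the cyclotomic factor `q ^ 8 - q ^ 4 + 1` of `q ^ 12 + 1`. In the span of `1` and a
Temperley–Lieb element `e`, the cube of `σ = q • 1 + q⁻¹ • e` is `q ^ 3 • 1` plus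
`q⁻¹ ^ 7 * (q ^ 8 - q ^ 4 + 1)` times `e`, so the `e`-part vanishes. The mirror crossing `σ'` is
`σ` for the primitive root `q⁻¹`. -/

theorem IsPrimitiveRoot.pow_eight_sub_pow_four_add_one_eq_zero {R : Type*} [CommRing R]
    [IsDomain R] {q : R} (hq : IsPrimitiveRoot q 24) : q ^ 8 - q ^ 4 + 1 = 0 := by
  have h12 : q ^ 12 = -1 :=
    (hq.pow_of_dvd (p := 12) (by norm_num) (by norm_num)).eq_neg_one_of_two_right
  have h4 : q ^ 4 + 1 ≠ 0 := fun h ↦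
    hq.pow_ne_one_of_pos_of_lt (l := 8) (by norm_num) (by norm_num)
      (by linear_combination (q ^ 4 - 1) * h)
  have hprod : (q ^ 4 + 1) * (q ^ 8 - q ^ 4 + 1) = 0 := by linear_combination h12
  exact (mul_eq_zero.mp hprod).resolve_left h4

section TemperleyLieb

variable {R A : Type*} [CommSemiring R] [Semiring A] [Algebra R A]

theorem smul_one_add_smul_mul_smul_one_add_smul {δ : R} {e : A} (he : e * e = δ • e)
    (a b c d : R) :
    (a • (1 : A) + b • e) * (c • 1 + d • e) =
      (a * c) • (1 : A) + (a * d + b * c + b * d * δ) • e := by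
  simp only [mul_add, add_mul, smul_mul_smul_comm, one_mul, mul_one, he, smul_smul, add_smul]
  abel

theorem smul_one_add_smul_pow_three {δ : R} {e : A} (he : e * e = δ • e) (a b : R) :
    (a • (1 : A) + b • e) ^ 3 =
      a ^ 3 • (1 : A) + (3 * a ^ 2 * b + 3 * a * b ^ 2 * δ + b ^ 3 * δ ^ 2) • e := by
  rw [pow_three, smul_one_add_smul_mul_smul_one_add_smul he,
    smul_one_add_smul_mul_smul_one_add_smul he]
  congr 2 <;> ring

end TemperleyLieb

theorem kauffman_crossing_pow_three {K A : Type*} [Field K] [Ring A] [Algebra K A] {q : K}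
    (hq : IsPrimitiveRoot q 24) {e : A} (he : e * e = (-q ^ 2 - q⁻¹ ^ 2) • e) :
    (q • (1 : A) + q⁻¹ • e) ^ 3 = q ^ 3 • (1 : A) := by
  have hq0 : q ≠ 0 := hq.ne_zero (by norm_num)
  have hcoeff : 3 * q ^ 2 * q⁻¹ + 3 * q * q⁻¹ ^ 2 * (-q ^ 2 - q⁻¹ ^ 2)
      + q⁻¹ ^ 3 * (-q ^ 2 - q⁻¹ ^ 2) ^ 2 = q⁻¹ ^ 7 * (q ^ 8 - q ^ 4 + 1) := by
    field_simp
    ring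
  rw [smul_one_add_smul_pow_three he, hcoeff, hq.pow_eight_sub_pow_four_add_one_eq_zero,
    mul_zero, zero_smul, add_zero]

/-- Over ℂ, if q is a primitive 24th root of unity and e·e = (−q² − q⁻²)·e, then
σ³ = q³·1, σ̄³ = q⁻³·1, and consequently σ³·σ̄³ = 1, where σ = q·1 + q⁻¹·e and
σ̄ = q⁻¹·1 + q·e. -/
theorem stmt_10 (A : Type*) [Ring A] [Algebra ℂ A] (q : ℂ)
    (hq : q ^ (24 : ℕ) = 1 ∧ ∀ m : ℕ, 1 ≤ m → m < 24 → q ^ m ≠ 1)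
    (e : A) (he : e * e = (-q ^ 2 - q⁻¹ ^ 2) • e)
    (σ σ' : A)
    (hσ : σ = q • (1 : A) + q⁻¹ • e)
    (hσ' : σ' = q⁻¹ • (1 : A) + q • e) :
    σ ^ 3 = (q ^ 3) • (1 : A) ∧ σ' ^ 3 = (q⁻¹ ^ 3) • (1 : A) ∧
      σ ^ 3 * σ' ^ 3 = 1 := by
  have hprim : IsPrimitiveRoot q 24 := .mk_of_lt q (by norm_num) hq.1 hq.2
  have hσ3 : σ ^ 3 = q ^ 3 • (1 : A) := hσ ▸ kauffman_crossing_pow_three hprim he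
  have hσ'3 : σ' ^ 3 = q⁻¹ ^ 3 • (1 : A) := by
    have he' : e * e = (-q⁻¹ ^ 2 - q⁻¹⁻¹ ^ 2) • e := by rw [he, inv_inv, neg_sub_comm]
    simpa only [inv_inv, ← hσ'] using kauffman_crossing_pow_three hprim.inv he'
  refine ⟨hσ3, hσ'3, ?_⟩
  rw [hσ3, hσ'3, smul_mul_smul_comm, one_mul, ← mul_pow,
    mul_inv_cancel₀ (hprim.ne_zero (by norm_num)), one_pow, one_smul]
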